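/- Let C be a k-linear category with finite-dimensional Hom spaces, σ an endofunctor of C, and B a set of bricks in C admitting a σ-decomposition {B^λ}_{λ∈Λ} over a totally ordered set Λ: B is the disjoint union of the B^λ, and Hom_C(X, σ(Y)) = 0 whenever X ∈ B^λ, Y ∈ B^δ and λ < δ. Then for every positive integer n, fpdim^n|_B(σ) ≤ sup over λ ∈ Λ and m ≤ n of fpdim^m|_{B^λ}(σ). -/

import Mathlib

/-!
Label each member of a brick set `φ ⊆ B` by the piece `B^λ` containing it. The vanishing
condition makes the adjacency matrix block triangular for the reverse order on `Λ`, so its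
characteristic polynomial is the product of those of the diagonal blocks, and an eigenvalue of
maximal modulus is an eigenvalue of one block. That block is the adjacency matrix of the brick
set `φ ∩ B^λ`, of size `m ≤ n`.
-/

open CategoryTheory CategoryTheory.Limits Filter
open scoped ENNReal Classical

noncomputable section

/-- The spectral radius of a complex square matrix: the supremum of the moduli of its
eigenvalues (elements of its spectrum). -/
def specRad {ι : Type*} [Fintype ι] [DecidableEq ι] (M : Matrix ι ι ℂ) : ℝ :=
  sSup ((fun z : ℂ => ‖z‖) '' spectrum ℂ M)

variable (k : Type) [Field k]
section CatDefs

variable {C : Type*} [Category C] [Preadditive C] [CategoryTheory.Linear k C]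

/-- A brick set: a finite family of objects with `dim Hom(X i, X j) = δ_{ij}`. -/
def IsBrickSet {n : ℕ} (φ : Fin n → C) : Prop :=
  ∀ i j, Module.finrank k (φ i ⟶ φ j) = if i = j then 1 else 0

/-- The adjacency matrix of a family of objects with respect to an endofunctor `σ`:
its `(i,j)` entry is `dim_k Hom(X i, σ (X j))`. -/
def adjMat (σ : C ⥤ C) {n : ℕ} (φ : Fin n → C) : Matrix (Fin n) (Fin n) ℂ :=
  fun i j => (Module.finrank k (φ i ⟶ σ.obj (φ j)) : ℂ)

/-- The `n`-th Frobenius-Perron dimension of an endofunctor: the supremum of the spectral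
radii of adjacency matrices of brick sets of size `n`. -/
def fpdimN (σ : C ⥤ C) (n : ℕ) : ℝ≥0∞ :=
  ⨆ (φ : Fin n → C) (_ : IsBrickSet k φ), ENNReal.ofReal (specRad (adjMat k σ φ))

/-- The Frobenius-Perron dimension of an endofunctor (testing against brick sets). -/
def fpdim (σ : C ⥤ C) : ℝ≥0∞ := ⨆ n : ℕ, fpdimN k σ (n + 1)

end CatDefs

section Restricted

variable {C : Type*} [Category C] [Preadditive C] [CategoryTheory.Linear k C]

/-- The `n`-th Frobenius-Perron dimension of an endofunctor `σ` restricted to a set of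
objects `B`: the supremum of spectral radii of adjacency matrices over brick sets of
size `n` all of whose members lie in `B`. -/
def fpdimResN (B : Set C) (σ : C ⥤ C) (n : ℕ) : ℝ≥0∞ :=
  ⨆ (φ : Fin n → C) (_ : (∀ i, φ i ∈ B) ∧ IsBrickSet k φ),
    ENNReal.ofReal (specRad (adjMat k σ φ))

end Restricted

section SpectralRadius

variable {ι : Type*} [Fintype ι] [DecidableEq ι]

lemma norm_le_specRad {M : Matrix ι ι ℂ} {μ : ℂ} (hμ : μ ∈ spectrum ℂ M) : ‖μ‖ ≤ specRad M :=
  le_csSup (M.finite_spectrum.image _).bddAbove ⟨μ, hμ, rfl⟩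

lemma Matrix.spectrum_nonempty [Nonempty ι] (M : Matrix ι ι ℂ) : (spectrum ℂ M).Nonempty := by
  have hdeg : 0 < M.charpoly.degree := by
    rw [M.charpoly_degree_eq_dim]
    exact_mod_cast Fintype.card_pos
  obtain ⟨μ, hμ⟩ := Complex.exists_root hdeg
  exact ⟨μ, M.mem_spectrum_iff_isRoot_charpoly.mpr hμ⟩

lemma exists_mem_spectrum_norm_eq_specRad [Nonempty ι] (M : Matrix ι ι ℂ) :
    ∃ μ ∈ spectrum ℂ M, ‖μ‖ = specRad M := by
  obtain ⟨μ, hμ, hμM⟩ := (M.spectrum_nonempty.image (‖·‖)).csSup_mem (M.finite_spectrum.image _)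
  exact ⟨μ, hμ, hμM⟩

lemma specRad_reindex {κ : Type*} [Fintype κ] [DecidableEq κ] (e : ι ≃ κ) (M : Matrix ι ι ℂ) :
    specRad (Matrix.reindex e e M) = specRad M := by
  have hspec : spectrum ℂ (Matrix.reindex e e M) = spectrum ℂ M := Set.ext fun μ => by
    simp only [Matrix.mem_spectrum_iff_isRoot_charpoly, Matrix.charpoly_reindex]
  rw [specRad, specRad, hspec]

end SpectralRadius

lemma Matrix.BlockTriangular.exists_mem_spectrum_toSquareBlock {K ι α : Type*} [Field K]
    [Fintype ι] [DecidableEq ι] [LinearOrder α] {M : Matrix ι ι K} {b : ι → α}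
    (hM : M.BlockTriangular b) {μ : K} (hμ : μ ∈ spectrum K M) :
    ∃ a ∈ Finset.univ.image b, μ ∈ spectrum K (M.toSquareBlock b a) := by
  rw [Matrix.mem_spectrum_iff_isRoot_charpoly, hM.charpoly, Polynomial.IsRoot,
    Polynomial.eval_prod, Finset.prod_eq_zero_iff] at hμ
  obtain ⟨a, ha, hroot⟩ := hμ
  exact ⟨a, ha, Matrix.mem_spectrum_iff_isRoot_charpoly.mpr hroot⟩

lemma Matrix.BlockTriangular.exists_specRad_le_specRad_toSquareBlock {ι α : Type*} [Fintype ι]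
    [DecidableEq ι] [Nonempty ι] [LinearOrder α] {M : Matrix ι ι ℂ} {b : ι → α}
    (hM : M.BlockTriangular b) :
    ∃ a ∈ Finset.univ.image b, specRad M ≤ specRad (M.toSquareBlock b a) := by
  obtain ⟨μ, hμ, hμM⟩ := exists_mem_spectrum_norm_eq_specRad M
  obtain ⟨a, ha, hμa⟩ := hM.exists_mem_spectrum_toSquareBlock hμ
  exact ⟨a, ha, hμM ▸ norm_le_specRad hμa⟩

section Bricks

variable {C : Type*} [Category C] [Preadditive C] [CategoryTheory.Linear k C]

lemma ofReal_specRad_le_fpdimResN {κ : Type*} [Fintype κ] [DecidableEq κ] {B : Set C}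
    (σ : C ⥤ C) (ψ : κ → C) (hB : ∀ x, ψ x ∈ B)
    (hψ : ∀ x y, Module.finrank k (ψ x ⟶ ψ y) = if x = y then 1 else 0) :
    ENNReal.ofReal (specRad (Matrix.of fun x y => (Module.finrank k (ψ x ⟶ σ.obj (ψ y)) : ℂ)))
      ≤ fpdimResN k B σ (Fintype.card κ) := by
  set e := Fintype.equivFin κ
  have hbrick : IsBrickSet k (ψ ∘ e.symm) := fun i j => by
    simp only [Function.comp_apply, hψ, e.symm.injective.eq_iff]
  have hadj : adjMat k σ (ψ ∘ e.symm) = Matrix.reindex e e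
      (Matrix.of fun x y => (Module.finrank k (ψ x ⟶ σ.obj (ψ y)) : ℂ)) := rfl
  rw [← specRad_reindex e, ← hadj]
  exact le_iSup₂ (f := fun φ (_ : (∀ i, φ i ∈ B) ∧ IsBrickSet k φ) =>
    ENNReal.ofReal (specRad (adjMat k σ φ))) (ψ ∘ e.symm) ⟨fun i => hB _, hbrick⟩

end Bricks

/-- Lemma 6.1: let `C` be a `k`-linear Hom-finite category, `σ` an endofunctor and `B`
a set of bricks with a `σ`-decomposition `{B^λ}` over a totally ordered set `Λ` (i.e.
`B` is the disjoint union of the `B^λ` and `Hom(X, σ Y) = 0` whenever `X ∈ B^λ`,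
`Y ∈ B^δ`, `λ < δ`). Then for every `n ≥ 1`,
`fpdim^n|_B(σ) ≤ sup_{λ ∈ Λ, m ≤ n} fpdim^m|_{B^λ}(σ)`. -/
theorem fpdim_sigma_decomposition
    {C : Type*} [Category C] [Preadditive C] [CategoryTheory.Linear k C]
    [∀ X Y : C, FiniteDimensional k (X ⟶ Y)]
    (σ : C ⥤ C) (Λ : Type*) [LinearOrder Λ] (B : Set C) (fam : Λ → Set C)
    (hbricks : ∀ X ∈ B, Module.finrank k (X ⟶ X) = 1)
    (hcover : B = ⋃ l : Λ, fam l)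
    (hdisj : ∀ l l' : Λ, l ≠ l' → Disjoint (fam l) (fam l'))
    (hvanish : ∀ l l' : Λ, l < l' → ∀ X ∈ fam l, ∀ Y ∈ fam l',
      Subsingleton (X ⟶ σ.obj Y)) :
    ∀ n : ℕ, 1 ≤ n →
      fpdimResN k B σ n ≤
        ⨆ (l : Λ) (m : ℕ) (_ : 1 ≤ m ∧ m ≤ n), fpdimResN k (fam l) σ m := by
  intro n hn
  refine iSup₂_le fun φ ⟨hmem, hbrick⟩ => ?_
  have : Nonempty (Fin n) := ⟨⟨0, hn⟩⟩
  choose l hl using fun i => Set.mem_iUnion.mp (hcover ▸ hmem i : φ i ∈ ⋃ l, fam l)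
  let b : Fin n → Λᵒᵈ := fun i => OrderDual.toDual (l i)
  have htri : (adjMat k σ φ).BlockTriangular b := fun i j hij => by
    have := hvanish _ _ hij _ (hl i) _ (hl j)
    simp [adjMat, Module.finrank_zero_of_subsingleton]
  obtain ⟨a, ha, hle⟩ := htri.exists_specRad_le_specRad_toSquareBlock
  obtain ⟨i₀, -, rfl⟩ := Finset.mem_image.mp ha
  have hblock : ∀ i : {i // b i = b i₀}, φ i ∈ fam (l i₀) := fun ⟨i, hi⟩ =>
    OrderDual.toDual.injective hi ▸ hl i
  calc ENNReal.ofReal (specRad (adjMat k σ φ))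
      ≤ ENNReal.ofReal (specRad ((adjMat k σ φ).toSquareBlock b (b i₀))) :=
        ENNReal.ofReal_le_ofReal hle
    _ ≤ fpdimResN k (fam (l i₀)) σ (Fintype.card {i // b i = b i₀}) :=
        ofReal_specRad_le_fpdimResN k σ (fun i : {i // b i = b i₀} => φ i) hblock fun x y => by
          simpa only [Subtype.ext_iff] using hbrick x y
    _ ≤ ⨆ (l : Λ) (m : ℕ) (_ : 1 ≤ m ∧ m ≤ n), fpdimResN k (fam l) σ m :=
        le_iSup_of_le (l i₀) <| le_iSup_of_le _ <| le_iSup_of_le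
          ⟨Fintype.card_pos_iff.mpr ⟨⟨i₀, rfl⟩⟩, (Fintype.card_subtype_le _).trans_eq (Fintype.card_fin n)⟩ le_rfl
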